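/- arXiv:1403.3464 — 5 statements merged into one kernel-verified Lean document; each statement's English description precedes it below -/
import Mathlib

section
/- For every integer m ≥ 2, √(m³·ln m) > √(m·ln m) + √((m−1)³·ln(m−1)), where ln 1 = 0. -/
theorem sqrt_cube_log_gt (m : ℕ) (hm : 2 ≤ m) :
    Real.sqrt ((m : ℝ) * Real.log (m : ℝ)) +
        Real.sqrt (((m : ℝ) - 1) ^ 3 * Real.log ((m : ℝ) - 1)) <
      Real.sqrt ((m : ℝ) ^ 3 * Real.log (m : ℝ)) := by
  set x : ℝ := (m : ℝ) with hx
  have hx2 : (2 : ℝ) ≤ x := by rw [hx]; exact_mod_cast hm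
  have hx1 : (1 : ℝ) ≤ x - 1 := by linarith
  have hxpos : (0 : ℝ) < x := by linarith
  have hx1pos : (0 : ℝ) < x - 1 := by linarith
  have hlogpos : 0 < Real.log x := Real.log_pos (by linarith)
  have hloglt : Real.log (x - 1) < Real.log x := Real.log_lt_log hx1pos (by linarith)
  -- step 1: replace log (x-1) by log x
  have h1 : Real.sqrt ((x - 1) ^ 3 * Real.log (x - 1))
      ≤ Real.sqrt ((x - 1) ^ 3 * Real.log x) := by
    apply Real.sqrt_le_sqrt
    exact mul_le_mul_of_nonneg_left hloglt.le (by positivity)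
  -- factor sqrt (log x)
  have hxe : x = Real.sqrt x ^ 2 := (Real.sq_sqrt hxpos.le).symm
  have hx1e : x - 1 = Real.sqrt (x - 1) ^ 2 := (Real.sq_sqrt hx1pos.le).symm
  have ha1 : 1 ≤ Real.sqrt x := by
    nlinarith [Real.sqrt_nonneg x]
  have hb1 : 1 ≤ Real.sqrt (x - 1) := by
    nlinarith [Real.sqrt_nonneg (x - 1)]
  have hba : Real.sqrt (x - 1) < Real.sqrt x := by
    apply Real.sqrt_lt_sqrt hx1pos.le (by linarith)
  have e1 : Real.sqrt (x * Real.log x) = Real.sqrt x * Real.sqrt (Real.log x) :=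
    Real.sqrt_mul hxpos.le _
  have e2 : Real.sqrt ((x - 1) ^ 3 * Real.log x)
      = Real.sqrt (x - 1) ^ 3 * Real.sqrt (Real.log x) := by
    rw [Real.sqrt_mul (by positivity)]
    congr 1
    rw [show (x - 1) ^ 3 = (Real.sqrt (x - 1) ^ 3) ^ 2 by rw [← pow_mul, pow_mul', ← hx1e]]
    exact Real.sqrt_sq (by positivity)
  have e3 : Real.sqrt (x ^ 3 * Real.log x) = Real.sqrt x ^ 3 * Real.sqrt (Real.log x) := by
    rw [Real.sqrt_mul (by positivity)]
    congr 1
    rw [show x ^ 3 = (Real.sqrt x ^ 3) ^ 2 by rw [← pow_mul, pow_mul', ← hxe]]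
    exact Real.sqrt_sq (by positivity)
  have hlsq : 0 < Real.sqrt (Real.log x) := Real.sqrt_pos.2 hlogpos
  have core : Real.sqrt x + Real.sqrt (x - 1) ^ 3 < Real.sqrt x ^ 3 := by
    nlinarith [mul_pos (sub_pos.2 hba) (mul_pos (lt_of_lt_of_le one_pos hb1)
      (lt_of_lt_of_le one_pos hb1))]
  calc Real.sqrt (x * Real.log x) + Real.sqrt ((x - 1) ^ 3 * Real.log (x - 1))
      ≤ Real.sqrt (x * Real.log x) + Real.sqrt ((x - 1) ^ 3 * Real.log x) := by linarith
    _ = (Real.sqrt x + Real.sqrt (x - 1) ^ 3) * Real.sqrt (Real.log x) := by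
        rw [e1, e2]; ring
    _ < Real.sqrt x ^ 3 * Real.sqrt (Real.log x) := by
        exact mul_lt_mul_of_pos_right core hlsq
    _ = Real.sqrt (x ^ 3 * Real.log x) := e3.symm
end

section
/- Let G = (V, E) be a finite graph and for X ⊆ V define the discrepancy D(X) = e(X) − (1/2)·C(|X|,2), where e(X) is the number of edges of the induced subgraph G[X]. Fix ν ≥ 0 and define D_ν(X) = |D(X)| − ν·√(|X|³·ln|X|). Suppose X ⊆ V maximizes D_ν over all subsets of V, and suppose D(X) > 0 and |X| ≥ 2. Then every vertex x ∈ X has degree in G[X] at least (1/2)(|X| − 1) + ν·√(|X|·ln|X|). -/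
open scoped Classical

/-- Number of edges of the subgraph of `G` induced by `X`. -/
noncomputable def edgesIn {V : Type*} [Fintype V] (G : SimpleGraph V) (X : Finset V) : ℕ :=
  (G.edgeFinset.filter (fun e => ∀ v ∈ e, v ∈ X)).card

/-- The discrepancy `D(X) = e(X) - (1/2)·C(|X|,2)`. -/
noncomputable def Disc {V : Type*} [Fintype V] (G : SimpleGraph V) (X : Finset V) : ℝ :=
  (edgesIn G X : ℝ) - (X.card.choose 2 : ℝ) / 2

/-- The skew discrepancy `D_ν(X) = |D(X)| - ν √(|X|³ ln |X|)`. -/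
noncomputable def DiscSkew {V : Type*} [Fintype V] (G : SimpleGraph V) (ν : ℝ)
    (X : Finset V) : ℝ :=
  |Disc G X| - ν * Real.sqrt ((X.card : ℝ) ^ 3 * Real.log (X.card : ℝ))

lemma edgesIn_erase {V : Type*} [Fintype V] (G : SimpleGraph V) (X : Finset V) (x : V)
    (hx : x ∈ X) :
    edgesIn G X = edgesIn G (X.erase x) + (X.filter (G.Adj x)).card := by
  classical
  unfold edgesIn
  have hsplit :
      ((G.edgeFinset.filter (fun e => ∀ v ∈ e, v ∈ X)).filter (fun e => x ∈ e)).card +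
      ((G.edgeFinset.filter (fun e => ∀ v ∈ e, v ∈ X)).filter (fun e => ¬ x ∈ e)).card =
      (G.edgeFinset.filter (fun e => ∀ v ∈ e, v ∈ X)).card :=
    Finset.card_filter_add_card_filter_not _
  have h2 : (G.edgeFinset.filter (fun e => ∀ v ∈ e, v ∈ X)).filter (fun e => ¬ x ∈ e) =
      G.edgeFinset.filter (fun e => ∀ v ∈ e, v ∈ X.erase x) := by
    ext e
    simp only [Finset.mem_filter, Finset.mem_erase, and_assoc]
    constructor
    · rintro ⟨he, hall, hxe⟩
      exact ⟨he, fun v hv => ⟨fun h => hxe (h ▸ hv), hall v hv⟩⟩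
    · rintro ⟨he, hall⟩
      exact ⟨he, fun v hv => (hall v hv).2, fun h => (hall x h).1 rfl⟩
  have h1 : (X.filter (G.Adj x)).card =
      ((G.edgeFinset.filter (fun e => ∀ v ∈ e, v ∈ X)).filter (fun e => x ∈ e)).card := by
    apply Finset.card_bij (fun y _ => s(x, y))
    · intro y hy
      simp only [Finset.mem_filter] at hy ⊢
      refine ⟨⟨?_, ?_⟩, ?_⟩
      · rw [SimpleGraph.mem_edgeFinset, SimpleGraph.mem_edgeSet]; exact hy.2
      · intro v hv
        rcases Sym2.mem_iff.mp hv with h | h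
        · exact h ▸ hx
        · exact h ▸ hy.1
      · exact Sym2.mem_mk_left x y
    · intro a ha b hb hab
      exact (Sym2.congr_right).mp hab
    · intro e he
      simp only [Finset.mem_filter] at he
      obtain ⟨⟨he1, he2⟩, he3⟩ := he
      induction e with
      | h a b =>
        rcases Sym2.mem_iff.mp he3 with h | h
        · subst h
          refine ⟨b, ?_, rfl⟩
          simp only [Finset.mem_filter]
          exact ⟨he2 b (Sym2.mem_mk_right x b),
            G.mem_edgeSet.mp (SimpleGraph.mem_edgeFinset.mp he1)⟩
        · subst h
          refine ⟨a, ?_, Sym2.eq_swap⟩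
          simp only [Finset.mem_filter]
          have := G.mem_edgeSet.mp (SimpleGraph.mem_edgeFinset.mp he1)
          exact ⟨he2 a (Sym2.mem_mk_left a x), this.symm⟩
  rw [h2] at hsplit
  omega

lemma sqrt_cube_aux (x : ℝ) (hx : 2 ≤ x) :
    Real.sqrt ((x - 1) ^ 3) + Real.sqrt x ≤ Real.sqrt (x ^ 3) := by
  have h1 : (0:ℝ) ≤ x - 1 := by linarith
  have h0 : (0:ℝ) ≤ x := by linarith
  set a := Real.sqrt ((x - 1) ^ 3) with ha
  set b := Real.sqrt x with hb
  have hA : a ^ 2 = (x - 1) ^ 3 := Real.sq_sqrt (by positivity)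
  have hB : b ^ 2 = x := Real.sq_sqrt h0
  have han : 0 ≤ a := Real.sqrt_nonneg _
  have hbn : 0 ≤ b := Real.sqrt_nonneg _
  have hab : a * b ≤ (x - 1) * x := by
    rw [ha, hb, ← Real.sqrt_mul (by positivity)]
    calc Real.sqrt ((x-1)^3 * x) ≤ Real.sqrt (((x-1)*x)^2) :=
          Real.sqrt_le_sqrt (by nlinarith)
      _ = (x-1)*x := Real.sqrt_sq (by positivity)
  have : (a + b) ^ 2 ≤ x ^ 3 := by nlinarith [sq_nonneg (x - 1)]
  calc a + b = Real.sqrt ((a + b) ^ 2) := (Real.sqrt_sq (by linarith)).symm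
    _ ≤ Real.sqrt (x ^ 3) := Real.sqrt_le_sqrt this

lemma key_sqrt (n : ℕ) (hn : 2 ≤ n) :
    Real.sqrt ((((n - 1 : ℕ)):ℝ) ^ 3 * Real.log ((n - 1 : ℕ) : ℝ)) +
      Real.sqrt ((n:ℝ) * Real.log n) ≤ Real.sqrt ((n:ℝ) ^ 3 * Real.log n) := by
  have hx : (2:ℝ) ≤ (n:ℝ) := by exact_mod_cast hn
  have hcast : ((n - 1 : ℕ) : ℝ) = (n:ℝ) - 1 := by
    have : 1 ≤ n := by omega
    push_cast [this]; ring
  rw [hcast]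
  have hL : 0 ≤ Real.log n := Real.log_nonneg (by linarith)
  have hm : (0:ℝ) ≤ (n:ℝ) - 1 := by linarith
  have hl : Real.log ((n:ℝ) - 1) ≤ Real.log n :=
    Real.log_le_log (by linarith) (by linarith)
  have step1 : Real.sqrt (((n:ℝ) - 1) ^ 3 * Real.log ((n:ℝ) - 1)) ≤
      Real.sqrt (((n:ℝ) - 1) ^ 3) * Real.sqrt (Real.log n) := by
    rw [← Real.sqrt_mul (pow_nonneg hm 3)]
    apply Real.sqrt_le_sqrt
    exact mul_le_mul_of_nonneg_left hl (pow_nonneg hm 3)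
  have step2 : Real.sqrt ((n:ℝ) * Real.log n) = Real.sqrt n * Real.sqrt (Real.log n) :=
    Real.sqrt_mul (by positivity) _
  have step3 : Real.sqrt ((n:ℝ) ^ 3 * Real.log n) = Real.sqrt ((n:ℝ)^3) * Real.sqrt (Real.log n) :=
    Real.sqrt_mul (by positivity) _
  rw [step2, step3]
  calc Real.sqrt (((n:ℝ) - 1) ^ 3 * Real.log ((n:ℝ) - 1)) + Real.sqrt (n:ℝ) * Real.sqrt (Real.log n)
      ≤ (Real.sqrt (((n:ℝ) - 1) ^ 3) + Real.sqrt (n:ℝ)) * Real.sqrt (Real.log n) := by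
        rw [add_mul]; gcongr
    _ ≤ Real.sqrt ((n:ℝ)^3) * Real.sqrt (Real.log n) := by
        gcongr
        exact sqrt_cube_aux _ hx

theorem min_degree_of_max_skew_disc {V : Type*} [Fintype V] (G : SimpleGraph V)
    (ν : ℝ) (hν : 0 ≤ ν) (X : Finset V)
    (hmax : ∀ Y : Finset V, DiscSkew G ν Y ≤ DiscSkew G ν X)
    (hpos : 0 < Disc G X) (hcard : 2 ≤ X.card) :
    ∀ x ∈ X,
      ((X.card : ℝ) - 1) / 2 + ν * Real.sqrt ((X.card : ℝ) * Real.log (X.card : ℝ)) ≤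
        ((X.filter (G.Adj x)).card : ℝ) := by
  intro x hx
  have hx1 : 1 ≤ X.card := by omega
  have herase : (X.erase x).card = X.card - 1 := Finset.card_erase_of_mem hx
  have hE : (edgesIn G X : ℝ) =
      (edgesIn G (X.erase x) : ℝ) + ((X.filter (G.Adj x)).card : ℝ) := by
    exact_mod_cast congrArg (Nat.cast : ℕ → ℝ) (edgesIn_erase G X x hx)
  have hchoose : X.card.choose 2 = (X.card - 1).choose 2 + (X.card - 1) := by
    obtain ⟨m, hm⟩ : ∃ m, X.card = m + 1 := ⟨X.card - 1, by omega⟩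
    rw [hm]
    simp [Nat.choose_succ_succ, Nat.choose_one_right]
    omega
  have hDisc : Disc G (X.erase x) =
      Disc G X + ((X.card:ℝ) - 1) / 2 - ((X.filter (G.Adj x)).card : ℝ) := by
    unfold Disc
    rw [herase, hchoose]
    have hcast : ((X.card - 1 : ℕ) : ℝ) = (X.card : ℝ) - 1 := by
      push_cast [hx1]; ring
    push_cast
    rw [hcast]
    linarith [hE]
  have hmaxY := hmax (X.erase x)
  unfold DiscSkew at hmaxY
  rw [herase] at hmaxY
  have habsX : |Disc G X| = Disc G X := abs_of_pos hpos
  have hle : Disc G (X.erase x) ≤ |Disc G (X.erase x)| := le_abs_self _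
  have hk := key_sqrt X.card hcard
  have hk' : ν * Real.sqrt ((((X.card - 1 : ℕ)):ℝ) ^ 3 * Real.log ((X.card - 1 : ℕ) : ℝ)) +
      ν * Real.sqrt ((X.card:ℝ) * Real.log (X.card:ℝ)) ≤
      ν * Real.sqrt ((X.card:ℝ) ^ 3 * Real.log (X.card:ℝ)) := by
    have := mul_le_mul_of_nonneg_left hk hν
    rw [mul_add] at this
    exact this
  rw [habsX] at hmaxY
  linarith [hmaxY, hle, hDisc, hk']
end

section
/- Let H be a graph on ℓ vertices and k ≤ ℓ a positive integer. Call a pair (v, T), with v a vertex and T a (k−1)-subset of V(H)\{v}, bad if v has fewer than d neighbours in T (for a fixed threshold d). If every k-subset U of V(H) contains a vertex w such that (w, U\{w}) is bad, then the number of bad pairs is at least C(ℓ, k). Consequently, since the total number of pairs is ℓ·C(ℓ−1, k−1), if a uniformly random pair is bad with probability less than C(ℓ,k)/(ℓ·C(ℓ−1,k−1)) = 1/k, then there exists a k-subset U such that every w ∈ U has at least d neighbours in U\{w}. -/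
open scoped Classical

/-- The set of bad pairs `(v, T)`: `T` is a `(k-1)`-subset of `V \ {v}` and
`v` has fewer than `d` neighbours in `T`. -/
noncomputable def badPairs {V : Type*} [Fintype V] (H : SimpleGraph V) (k d : ℕ) :
    Finset (V × Finset V) :=
  Finset.univ.filter (fun p : V × Finset V =>
    p.2.card = k - 1 ∧ p.1 ∉ p.2 ∧ (p.2.filter (H.Adj p.1)).card < d)

theorem bad_pairs_counting {V : Type*} [Fintype V] (H : SimpleGraph V)
    (k d : ℕ) (hk : 1 ≤ k) (hkl : k ≤ Fintype.card V) :
    ((∀ U : Finset V, U.card = k →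
        ∃ w ∈ U, (w, U.erase w) ∈ badPairs H k d) →
      (Fintype.card V).choose k ≤ (badPairs H k d).card) ∧
    ((badPairs H k d).card * k < Fintype.card V * (Fintype.card V - 1).choose (k - 1) →
      ∃ U : Finset V, U.card = k ∧
        ∀ w ∈ U, d ≤ ((U.erase w).filter (H.Adj w)).card) := by
  have part1 : (∀ U : Finset V, U.card = k →
        ∃ w ∈ U, (w, U.erase w) ∈ badPairs H k d) →
      (Fintype.card V).choose k ≤ (badPairs H k d).card := by
    intro h
    have := Finset.card_le_card_of_surjOn
      (s := badPairs H k d) (t := Finset.powersetCard k (Finset.univ : Finset V))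
      (fun p : V × Finset V => insert p.1 p.2) ?_
    · simpa using this
    · intro U hU
      have hU' : U.card = k :=
        (Finset.mem_powersetCard_univ.mp (Finset.mem_coe.mp hU))
      obtain ⟨w, hw, hbad⟩ := h U hU'
      exact ⟨(w, U.erase w), hbad, by simp [Finset.insert_erase hw]⟩
  refine ⟨part1, ?_⟩
  intro hlt
  by_contra hcon
  push_neg at hcon
  have hall : ∀ U : Finset V, U.card = k → ∃ w ∈ U, (w, U.erase w) ∈ badPairs H k d := by
    intro U hU
    obtain ⟨w, hw, hdw⟩ := hcon U hU
    refine ⟨w, hw, ?_⟩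
    simp only [badPairs, Finset.mem_filter, Finset.mem_univ, true_and]
    exact ⟨by rw [Finset.card_erase_of_mem hw, hU], Finset.notMem_erase w U,
      hdw⟩
  have h1 := part1 hall
  have hident : (Fintype.card V).choose k * k
      = Fintype.card V * (Fintype.card V - 1).choose (k - 1) := by
    obtain ⟨n, hn⟩ : ∃ n, Fintype.card V = n + 1 :=
      ⟨Fintype.card V - 1, by omega⟩
    obtain ⟨m, hm⟩ : ∃ m, k = m + 1 := ⟨k - 1, by omega⟩
    rw [hn, hm]
    simp only [Nat.add_sub_cancel]
    exact (Nat.add_one_mul_choose_eq n m).symm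
  have : Fintype.card V * (Fintype.card V - 1).choose (k - 1)
      ≤ (badPairs H k d).card * k := by
    rw [← hident]
    exact Nat.mul_le_mul_right k h1
  omega
end

section
/- For every integer t with 1 ≤ t ≤ (k+1)/2, there exists a graph G on k + 2t − 3 vertices such that neither G nor its complement contains an induced subgraph on exactly k vertices with minimum degree at least t; i.e., the fixed quasi-Ramsey number satisfies R*_t(k) ≥ k + 2t − 2. A witnessing construction: V = P ∪ Q ∪ R where P is a clique on 2(t−1) vertices, Q is an independent set on 2(t−1) vertices, R is an independent set on k − 2t + 1 vertices, all edges between P and R are present, no edges between Q and R are present, and the bipartite graph between P and Q is (t−1)-regular. -/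
open scoped Classical

/-- The fixed quasi-Ramsey number `R*_t(k)`: the least `N` (as an extended natural,
`⊤` if none exists) such that every graph on `N` vertices contains a set `S` of
exactly `k` vertices with `G[S]` or its complement of minimum degree at least `t`. -/
noncomputable def Rfix (t k : ℕ) : ℕ∞ :=
  sInf {n : ℕ∞ | ∃ N : ℕ, n = N ∧ ∀ G : SimpleGraph (Fin N),
    ∃ S : Finset (Fin N), S.card = k ∧
      ((∀ v ∈ S, t ≤ (S.filter (G.Adj v)).card) ∨
       (∀ v ∈ S, t ≤ (S.filter (Gᶜ.Adj v)).card))}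

/-!
With `s = t - 1`, take a clique `P` and an independent set `Q` of `2s` vertices each, joined by an
`s`-regular bipartite graph, and an independent set `R` of `k - 2s - 1` vertices joined completely
to `P` and not at all to `Q`; this has `k + 2t - 3` vertices. A vertex of `Q` has degree `s < t`,
and a vertex of `P` has only its `s` non-neighbours in `Q` as non-neighbours. A `k`-set leaves out
only `2s - 1` vertices, so it meets both `Q` and `P`; hence neither it nor its complement induces
minimum degree `≥ t`. Restricting this graph to fewer vertices keeps that property, which gives the
bound on `R*_t(k)`.
-/

open Finset SimpleGraph

namespace SimpleGraph

variable {V W : Type*} (G : SimpleGraph V) (t : ℕ)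

def IsHomogeneousSet (S : Finset V) : Prop :=
  (∀ v ∈ S, t ≤ #(S.filter (G.Adj v))) ∨ (∀ v ∈ S, t ≤ #(S.filter (Gᶜ.Adj v)))

lemma card_filter_adj_le_degree (S : Finset V) (v : V) [Fintype (G.neighborSet v)]
    [DecidablePred (G.Adj v)] :
    #(S.filter (G.Adj v)) ≤ G.degree v := by
  rw [← card_neighborFinset_eq_degree]
  exact card_le_card fun w hw => by simpa using (mem_filter.1 hw).2

variable {G t}

lemma not_isHomogeneousSet_of_degree_lt [Fintype V] [∀ v, Fintype (G.neighborSet v)]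
    [∀ v, Fintype (Gᶜ.neighborSet v)] {A B S : Finset V} (hA : ∀ v ∈ A, G.degree v < t)
    (hB : ∀ v ∈ B, Gᶜ.degree v < t) (hAS : Fintype.card V < #A + #S)
    (hBS : Fintype.card V < #B + #S) : ¬ G.IsHomogeneousSet t S := by
  rintro (hS | hS)
  · obtain ⟨v, hv⟩ := inter_nonempty_of_card_lt_card_add_card (subset_univ A) (subset_univ S) hAS
    rw [mem_inter] at hv
    exact (hS v hv.2).not_gt ((G.card_filter_adj_le_degree S v).trans_lt (hA v hv.1))
  · obtain ⟨v, hv⟩ := inter_nonempty_of_card_lt_card_add_card (subset_univ B) (subset_univ S) hBS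
    rw [mem_inter] at hv
    exact (hS v hv.2).not_gt ((Gᶜ.card_filter_adj_le_degree S v).trans_lt (hB v hv.1))

lemma isHomogeneousSet_comap_iff (f : W ↪ V) (S : Finset W) :
    (G.comap f).IsHomogeneousSet t S ↔ G.IsHomogeneousSet t (S.map f) := by
  simp [IsHomogeneousSet, filter_map]

lemma not_isHomogeneousSet_comap {k : ℕ} (hG : ∀ S : Finset V, #S = k → ¬ G.IsHomogeneousSet t S)
    (f : W ↪ V) (S : Finset W) (hS : #S = k) : ¬ (G.comap f).IsHomogeneousSet t S := by
  rw [isHomogeneousSet_comap_iff]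
  exact hG _ (by rw [card_map, hS])

lemma card_add_one_le_Rfix [Fintype V] {k : ℕ}
    (hG : ∀ S : Finset V, #S = k → ¬ G.IsHomogeneousSet t S) :
    ((Fintype.card V + 1 : ℕ) : ℕ∞) ≤ Rfix t k := by
  refine le_sInf ?_
  rintro _ ⟨N, rfl, hN⟩
  rw [Nat.cast_le, Nat.succ_le_iff]
  by_contra! hNV
  let f : Fin N ↪ V := (Fin.castLEEmb hNV).trans (Fintype.equivFin V).symm.toEmbedding
  obtain ⟨S, hS, hhom⟩ := hN (G.comap f)
  -- `convert` bridges the decidability instances elaborated inside `Rfix`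
  exact not_isHomogeneousSet_comap hG f S hS (by unfold IsHomogeneousSet; convert hhom)

end SimpleGraph

namespace QuasiRamsey

variable (s r : ℕ)

/-- `inl (true, c, i)` is a vertex of the clique `P`, `inl (false, c, i)` one of the independent
set `Q`, `inr j` one of `R`. The bit `c` cuts `P` and `Q` into halves of size `s`, and the `P`–`Q`
edges join equal halves: a disjoint union of two copies of `K_{s,s}`, an `s`-regular bipartite
graph. -/
abbrev Vertex := (Bool × Bool × Fin s) ⊕ Fin r

def rel : Vertex s r → Vertex s r → Prop
  | .inl (true, _, _), .inl (true, _, _) => True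
  | .inl (true, c, _), .inl (false, d, _) => c = d
  | .inl (true, _, _), .inr _ => True
  | _, _ => False

def graph : SimpleGraph (Vertex s r) := SimpleGraph.fromRel (rel s r)

lemma card_vertex : Fintype.card (Vertex s r) = 4 * s + r := by
  simp; ring

variable {s r}

lemma degree_inl_false_le (c : Bool) (i : Fin s) : (graph s r).degree (.inl (false, c, i)) ≤ s := by
  rw [← card_neighborFinset_eq_degree]
  calc _ ≤ #(univ.image fun j : Fin s => (.inl (true, c, j) : Vertex s r)) := card_le_card ?_
    _ ≤ s := card_image_le.trans (by simp)
  intro x hx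
  rw [mem_neighborFinset] at hx
  rcases x with ⟨_ | _, d, j⟩ | j <;> simp_all [graph, rel]

lemma compl_degree_inl_true_le (c : Bool) (i : Fin s) : (graph s r)ᶜ.degree (.inl (true, c, i)) ≤ s := by
  rw [← card_neighborFinset_eq_degree]
  calc _ ≤ #(univ.image fun j : Fin s => (.inl (false, !c, j) : Vertex s r)) := card_le_card ?_
    _ ≤ s := card_image_le.trans (by simp)
  intro x hx
  rw [mem_neighborFinset] at hx
  cases c <;> rcases x with ⟨_ | _, _ | _, j⟩ | j <;> simp_all [graph, rel]

lemma not_isHomogeneousSet {k : ℕ} (hk : 2 * s + r < k) (S : Finset (Vertex s r)) (hS : #S = k) :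
    ¬ (graph s r).IsHomogeneousSet (s + 1) S := by
  let Q : Bool × Fin s ↪ Vertex s r :=
    ⟨fun x => .inl (false, x), Sum.inl_injective.comp (Prod.mk_right_injective false)⟩
  let P : Bool × Fin s ↪ Vertex s r :=
    ⟨fun x => .inl (true, x), Sum.inl_injective.comp (Prod.mk_right_injective true)⟩
  refine not_isHomogeneousSet_of_degree_lt (A := univ.map Q) (B := univ.map P) ?_ ?_ ?_ ?_
  · simp only [mem_map, mem_univ, true_and, forall_exists_index, forall_apply_eq_imp_iff]
    exact fun ⟨c, i⟩ => Nat.lt_succ_of_le (degree_inl_false_le c i)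
  · simp only [mem_map, mem_univ, true_and, forall_exists_index, forall_apply_eq_imp_iff]
    exact fun ⟨c, i⟩ => Nat.lt_succ_of_le (compl_degree_inl_true_le c i)
  all_goals simp only [card_map, card_univ, Fintype.card_prod, Fintype.card_bool, Fintype.card_fin,
    card_vertex, hS]; omega

end QuasiRamsey

open QuasiRamsey in
theorem fixed_quasi_ramsey_lower (k t : ℕ) (ht : 1 ≤ t) (htk : 2 * t ≤ k + 1) :
    (∃ G : SimpleGraph (Fin (k + 2 * t - 3)),
      ∀ S : Finset (Fin (k + 2 * t - 3)), S.card = k →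
        (∃ v ∈ S, (S.filter (G.Adj v)).card < t) ∧
        (∃ v ∈ S, (S.filter (Gᶜ.Adj v)).card < t)) ∧
    ((k + 2 * t - 2 : ℕ) : ℕ∞) ≤ Rfix t k := by
  obtain ⟨s, rfl⟩ : ∃ s, t = s + 1 := ⟨t - 1, by omega⟩
  have hcard : Fintype.card (Vertex s (k - 2 * s - 1)) = k + 2 * (s + 1) - 3 := by
    rw [card_vertex]; omega
  have hG := not_isHomogeneousSet (s := s) (r := k - 2 * s - 1) (k := k) (by omega)
  let e := (Fintype.equivFinOfCardEq hcard).symm.toEmbedding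
  refine ⟨⟨(graph s _).comap e, fun S hS => ?_⟩, ?_⟩
  · simpa [IsHomogeneousSet] using not_isHomogeneousSet_comap hG e S hS
  · simpa [hcard, show k + 2 * (s + 1) - 3 + 1 = k + 2 * (s + 1) - 2 by omega]
      using card_add_one_le_Rfix hG
end

section
/- Let 0 ≤ α < 1/2 and let k be sufficiently large. Suppose n ≥ (√(1−α)/(1/2−α)^{1/2})·k·(1 + 1/(k(1−α)(1/2−α)^{1/2}))^{1/2}. If G is a graph on n vertices with at least (1/2)·C(n,2) edges, then G has an induced subgraph H on at least k vertices with minimum degree δ(H) ≥ α·|V(H)|. -/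
open scoped Classical

/-!
Peel off, one at a time, a vertex whose degree inside the current vertex set `S` is below
`α |S|`. This lowers the degree sum `D(S) = 2 e(G[S])` by less than `2α |S|`, so the potential
`D(S) - α |S| (|S| + 1)` strictly increases. Initially `D(V) ≥ n (n - 1) / 2`, and the lower
bound on `n` makes the potential exceed its value `k (k - 1) - α k (k + 1)` at any set of exactly
`k` vertices, where `D ≤ k (k - 1)`. Hence the peeling stops before reaching `k` vertices, at a
set in which every vertex has at least `α |S|` neighbours.
-/

open Finset Filter Topology

namespace SimpleGraph

variable {V : Type*} (G : SimpleGraph V) [DecidableRel G.Adj]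

def inducedDegreeSum (S : Finset V) : ℕ :=
  ∑ v ∈ S, #(S.filter (G.Adj v))

theorem inducedDegreeSum_add_card_le (S : Finset V) :
    G.inducedDegreeSum S + #S ≤ #S * #S :=
  calc G.inducedDegreeSum S + #S = ∑ v ∈ S, (#(S.filter (G.Adj v)) + 1) := by
        rw [inducedDegreeSum, sum_add_distrib, card_eq_sum_ones]
    _ ≤ ∑ _v ∈ S, #S :=
        sum_le_sum fun v hv => card_lt_card (filter_ssubset.2 ⟨v, hv, G.irrefl⟩)
    _ = #S * #S := by rw [sum_const, smul_eq_mul]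

theorem inducedDegreeSum_univ [Fintype V] :
    G.inducedDegreeSum univ = 2 * #G.edgeFinset := by
  rw [← sum_degrees_eq_twice_card_edges, inducedDegreeSum]
  simp only [degree, neighborFinset_eq_filter]

variable [DecidableEq V]

theorem inducedDegreeSum_erase {S : Finset V} {v : V} (hv : v ∈ S) :
    G.inducedDegreeSum S =
      G.inducedDegreeSum (S.erase v) + 2 * #(S.filter (G.Adj v)) := by
  have hrow (w : V) : #(S.filter (G.Adj w)) =
      #((S.erase v).filter (G.Adj w)) + if G.Adj w v then 1 else 0 := by
    rw [card_filter, card_filter, ← sum_erase_add S _ hv]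
  have hcol : ∑ w ∈ S.erase v, (if G.Adj w v then 1 else 0) = #(S.filter (G.Adj v)) := by
    rw [← card_filter, filter_erase, erase_eq_of_notMem (by simp)]
    simp_rw [G.adj_comm]
  rw [inducedDegreeSum, inducedDegreeSum, ← sum_erase_add S _ hv,
    sum_congr rfl fun w _ => hrow w, sum_add_distrib, hcol]
  ring

theorem exists_subset_le_card_forall_mul_card_le_degree (α : ℝ) {k : ℕ} {S : Finset V}
    (hk : k ≤ #S)
    (hS : (k : ℝ) * (k - 1) - α * k * (k + 1) < G.inducedDegreeSum S - α * #S * (#S + 1)) :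
    ∃ T ⊆ S, k ≤ #T ∧ ∀ v ∈ T, α * #T ≤ #(T.filter (G.Adj v)) := by
  induction S using Finset.strongInduction with
  | H S ih =>
  by_cases hgood : ∀ v ∈ S, α * #S ≤ #(S.filter (G.Adj v))
  · exact ⟨S, subset_rfl, hk, hgood⟩
  push Not at hgood
  obtain ⟨v, hv, hlow⟩ := hgood
  have hcard := card_erase_add_one hv
  have hkS : k < #S := by
    by_contra! hSk
    have hle := G.inducedDegreeSum_add_card_le S
    rw [le_antisymm hSk hk] at hS hle
    have : (G.inducedDegreeSum S : ℝ) + k ≤ k * k := by exact_mod_cast hle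
    linarith
  have hsplit : (G.inducedDegreeSum S : ℝ) =
      G.inducedDegreeSum (S.erase v) + 2 * #(S.filter (G.Adj v)) := by
    exact_mod_cast G.inducedDegreeSum_erase hv
  have hS' : (k : ℝ) * (k - 1) - α * k * (k + 1) <
      G.inducedDegreeSum (S.erase v) - α * #(S.erase v) * (#(S.erase v) + 1) := by
    rw [← hcard] at hS hlow
    push_cast at hS hlow
    linarith
  obtain ⟨T, hTS, hT⟩ := ih (S.erase v) (erase_ssubset hv) (by omega) hS'
  exact ⟨T, hTS.trans (erase_subset v S), hT⟩

end SimpleGraph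

theorem quadratic_le_quadratic {a b x y : ℝ} (hyx : y ≤ x) (hb : b ≤ a * (x + y)) :
    a * y ^ 2 - b * y ≤ a * x ^ 2 - b * x := by
  linear_combination mul_nonneg (sub_nonneg.2 hyx) (sub_nonneg.2 hb)

theorem half_add_mul_sqrt_one_sub_lt_one {α : ℝ} (hα : α ≤ 1) :
    (1 / 2 + α) * √(1 - α) < 1 := by
  have hr := Real.sqrt_nonneg (1 - α)
  have hr2 : √(1 - α) ^ 2 = 1 - α := Real.sq_sqrt (by linarith)
  nlinarith [mul_nonneg hr (sq_nonneg (√(1 - α) - 7 / 10)), sq_nonneg (√(1 - α) - 71 / 100)]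

theorem tendsto_sqrt_one_add_one_div {ι : Type*} {l : Filter ι} {f : ι → ℝ}
    (hf : Tendsto f l atTop) : Tendsto (fun i => √(1 + 1 / f i)) l (𝓝 1) := by
  simpa using (hf.inv_tendsto_atTop.const_add 1).sqrt

theorem eventually_quadratic_lt_of_le (α : ℝ) (hα0 : 0 ≤ α) (hα : α < 1 / 2) :
    ∀ᶠ k : ℕ in atTop, ∀ x : ℝ,
      √(1 - α) / √(1 / 2 - α) * k * √(1 + 1 / (k * (1 - α) * √(1 / 2 - α))) ≤ x →
      k ≤ x ∧ (1 - α) * k ^ 2 - (1 + α) * k < (1 / 2 - α) * x ^ 2 - (1 / 2 + α) * x := by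
  set r := √(1 - α)
  set s := √(1 / 2 - α)
  have h1α : 0 < 1 - α := by linarith
  have hr : 0 < r := Real.sqrt_pos.2 h1α
  have hr2 : r ^ 2 = 1 - α := Real.sq_sqrt h1α.le
  have hs : 0 < s := Real.sqrt_pos.2 (by linarith)
  have hs2 : s ^ 2 = 1 / 2 - α := Real.sq_sqrt (by linarith)
  have hlead : (1 / 2 + α) * (r / s) < 1 / s + (1 + α) := by
    have := half_add_mul_sqrt_one_sub_lt_one (α := α) (by linarith)
    rw [mul_div_assoc', div_add' _ _ _ hs.ne', div_lt_div_iff_of_pos_right hs]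
    nlinarith
  have hsqrt := tendsto_sqrt_one_add_one_div
    ((tendsto_natCast_atTop_atTop.atTop_mul_const h1α).atTop_mul_const hs)
  filter_upwards [(hsqrt.const_mul _).eventually_lt_const (by rwa [mul_one]),
    tendsto_natCast_atTop_atTop.eventually_ge_atTop ((1 / 2 + α) / (2 * (1 / 2 - α))),
    eventually_gt_atTop 0] with k hlt hbig hk x hx
  have hk' : (0 : ℝ) < k := Nat.cast_pos.2 hk
  have hε : 0 < 1 / (k * (1 - α) * s) := one_div_pos.2 (mul_pos (mul_pos hk' h1α) hs)
  set t := √(1 + 1 / (k * (1 - α) * s))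
  have ht1 : 1 ≤ t := Real.one_le_sqrt.2 (by linarith)
  have ht2 : t ^ 2 = 1 + 1 / (k * (1 - α) * s) := Real.sq_sqrt (by linarith)
  -- The threshold `n0` gains exactly `k / s` in the quadratic term; this pays for the linear terms
  -- because `(1/2 + α) r < 1`.
  set n0 := r / s * k * t
  have hkn0 : (k : ℝ) ≤ n0 := by
    have hrs : 1 ≤ r / s := (one_le_div hs).2 (Real.sqrt_le_sqrt (by linarith))
    nlinarith [mul_le_mul hrs ht1 zero_le_one (by positivity)]
  have hn0sq : (1 / 2 - α) * n0 ^ 2 = (1 - α) * k ^ 2 + k / s := by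
    rw [← hr2] at ht2
    rw [← hs2, ← hr2]
    simp only [n0, mul_pow, div_pow, ht2]
    field_simp
  have hn0lin : (1 / 2 + α) * n0 < k / s + (1 + α) * k :=
    calc (1 / 2 + α) * n0 = (1 / 2 + α) * (r / s) * t * k := by ring
      _ < (1 / s + (1 + α)) * k := mul_lt_mul_of_pos_right hlt hk'
      _ = k / s + (1 + α) * k := by ring
  have hvertex : 1 / 2 + α ≤ (1 / 2 - α) * (x + n0) := by
    rw [div_le_iff₀ (by linarith)] at hbig
    nlinarith
  have hmono := quadratic_le_quadratic hx hvertex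
  exact ⟨hkn0.trans hx, by linarith⟩

theorem dense_graph_has_min_degree_subgraph (α : ℝ) (hα0 : 0 ≤ α) (hα : α < 1 / 2) :
    ∀ᶠ k : ℕ in Filter.atTop, ∀ n : ℕ,
      Real.sqrt (1 - α) / Real.sqrt (1 / 2 - α) * (k : ℝ) *
          Real.sqrt (1 + 1 / ((k : ℝ) * (1 - α) * Real.sqrt (1 / 2 - α))) ≤ (n : ℝ) →
      ∀ G : SimpleGraph (Fin n),
        (n.choose 2 : ℝ) / 2 ≤ (G.edgeFinset.card : ℝ) →
        ∃ S : Finset (Fin n), k ≤ S.card ∧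
          ∀ v ∈ S, α * (S.card : ℝ) ≤ ((S.filter (G.Adj v)).card : ℝ) := by
  filter_upwards [eventually_quadratic_lt_of_le α hα0 hα] with k hk n hn G hE
  obtain ⟨hkn, hquad⟩ := hk n hn
  have hD : (G.inducedDegreeSum univ : ℝ) = 2 * #G.edgeFinset := by
    exact_mod_cast G.inducedDegreeSum_univ
  rw [Nat.cast_choose_two] at hE
  obtain ⟨S, -, hS⟩ := G.exists_subset_le_card_forall_mul_card_le_degree α (S := univ)
    (by simpa using (Nat.cast_le.1 hkn : k ≤ n))
    (by rw [hD, card_univ, Fintype.card_fin]; linarith)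
  exact ⟨S, hS⟩
end
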